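/- Let A be a Banach algebra, φ a non-zero multiplicative linear functional on A, and suppose A is left φ-biflat with ker(φ) equal to the norm-closure of A·ker(φ). Then there exists a bounded left A-module morphism θ : A/ker(φ) → A** such that φ̃(θ(a + ker φ)) = φ(a) for each a ∈ A (this is Step 2 of the proof of Lemma 2.1). -/

import Mathlib

/-!
We realize the bidual `(B ⊗_p B)**` of the projective tensor product of a Banach algebra `B`
with itself canonically as the dual of the Banach space `B →L[ℂ] B* ` of bounded bilinear
forms on `B` (the latter being isometrically isomorphic to `(B ⊗_p B)*`).  All the canonical
Banach `B`-bimodule actions are spelled out explicitly through this identification.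
The multiplication of the Banach algebra `B` is encoded as a bounded bilinear map
`μ : B →L[ℂ] B →L[ℂ] B` (for a Banach algebra `A`, `μ = ContinuousLinearMap.mul ℂ A`).
-/

noncomputable section

namespace NormedSpace

/-- The topological dual of a normed space (removed from Mathlib; old definition restored). -/
abbrev Dual (𝕜 : Type*) [NontriviallyNormedField 𝕜] (E : Type*) [SeminormedAddCommGroup E]
    [NormedSpace 𝕜 E] : Type _ := E →L[𝕜] 𝕜

end NormedSpace

open ContinuousLinearMap NormedSpace

/-- The space of bounded bilinear forms on `B`, canonically the dual of the projective
tensor product `B ⊗_p B`. -/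
abbrev BilForm (B : Type*) [NormedAddCommGroup B] [NormedSpace ℂ B] : Type _ :=
  B →L[ℂ] Dual ℂ B

/-- The bidual of the projective tensor product `B ⊗_p B`, realized canonically as the dual of
the Banach space of bounded bilinear forms on `B`. -/
abbrev TensorBidual (B : Type*) [NormedAddCommGroup B] [NormedSpace ℂ B] : Type _ :=
  Dual ℂ (BilForm B)

/-- The bidual `B**` of a normed space `B`. -/
abbrev Bidual (B : Type*) [NormedAddCommGroup B] [NormedSpace ℂ B] : Type _ :=
  Dual ℂ (Dual ℂ B)

variable {B : Type*} [NormedAddCommGroup B] [NormedSpace ℂ B]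

/-- The left action of `a ∈ B` (with multiplication `μ`) on `(B ⊗_p B)**`:
`(a • T) β = T ((x, y) ↦ β (a x, y))`, the canonical bidual extension of the
`B`-bimodule action `a • (x ⊗ y) = (a x) ⊗ y` on `B ⊗_p B`. -/
def tensorLSmul (μ : B →L[ℂ] B →L[ℂ] B) (a : B) (T : TensorBidual B) : TensorBidual B :=
  T.comp ((compL ℂ B B (Dual ℂ B)).flip (μ a))

/-- The right action of `a ∈ B` on `(B ⊗_p B)**`:
`(T • a) β = T ((x, y) ↦ β (x, y a))`, the canonical bidual extension of the
`B`-bimodule action `(x ⊗ y) • a = x ⊗ (y a)` on `B ⊗_p B`. -/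
def tensorRSmul (μ : B →L[ℂ] B →L[ℂ] B) (T : TensorBidual B) (a : B) : TensorBidual B :=
  T.comp (compL ℂ B (Dual ℂ B) (Dual ℂ B) ((compL ℂ B B ℂ).flip (μ.flip a)))

/-- `π_B^* ψ`, the image of a functional `ψ ∈ B*` under the adjoint of the product
morphism `π_B : B ⊗_p B → B`; as a bilinear form it is `(x, y) ↦ ψ (x y)`.  Thus
`π_B** T ψ = T (piDual μ ψ)` for `T ∈ (B ⊗_p B)**`. -/
def piDual (μ : B →L[ℂ] B →L[ℂ] B) (ψ : Dual ℂ B) : BilForm B :=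
  (compL ℂ B B ℂ ψ).comp μ

/-- The left action of `a ∈ B` on the bidual `B**`: `(a • m) f = m (f ∘ (a * ·))`. -/
def bidualLSmul (μ : B →L[ℂ] B →L[ℂ] B) (a : B) (m : Bidual B) : Bidual B :=
  m.comp ((compL ℂ B B ℂ).flip (μ a))

/-- A Banach algebra `B` (with multiplication `μ` and a multiplicative functional `ψ`) is
*left `ψ`-biflat* if there is a bounded linear map `ρ : B → (B ⊗_p B)**` with
`ρ (a b) = ψ (b) ρ (a) = a • ρ (b)` for all `a, b ∈ B`, and `ψ̃ ∘ π_B** ∘ ρ = ψ`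
(note `(ψ̃ ∘ π_B**) T = T (piDual μ ψ)`). -/
def IsLeftBiflat (μ : B →L[ℂ] B →L[ℂ] B) (ψ : Dual ℂ B) : Prop :=
  ∃ ρ : B →L[ℂ] TensorBidual B,
    (∀ a b : B, ρ (μ a b) = ψ b • ρ a ∧ ρ (μ a b) = tensorLSmul μ a (ρ b)) ∧
    ∀ a : B, ρ a (piDual μ ψ) = ψ a

/-- A Banach algebra `B` is *left `ψ`-amenable* if there is `m ∈ B**` with
`a • m = ψ (a) m` for all `a ∈ B` and `ψ̃ (m) = m (ψ) = 1`. -/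
def IsLeftAmenable (μ : B →L[ℂ] B →L[ℂ] B) (ψ : Dual ℂ B) : Prop :=
  ∃ m : Bidual B, (∀ (a : B) (f : Dual ℂ B), m (f.comp (μ a)) = ψ a * m f) ∧ m ψ = 1

/-- The bilinear form `(x, y) ↦ f x * ψ y`; it is the tensor `f ⊗ ψ ∈ (B ⊗_p B)*`. -/
def sliceRight (ψ : Dual ℂ B) : Dual ℂ B →L[ℂ] BilForm B :=
  (smulRightL ℂ B (Dual ℂ B)).flip ψ

theorem sliceRight_comp (μ : B →L[ℂ] B →L[ℂ] B) (ψ f : Dual ℂ B) (a : B) :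
    sliceRight ψ (f.comp (μ a)) = (sliceRight ψ f).comp (μ a) := rfl

theorem sliceRight_self_eq_piDual {μ : B →L[ℂ] B →L[ℂ] B} {ψ : Dual ℂ B}
    (hψ : ∀ x y : B, ψ (μ x y) = ψ x * ψ y) : sliceRight ψ ψ = piDual μ ψ := by
  ext x y
  exact (hψ x y).symm

/-- The candidate `θ`: `ρ` followed by the bidual of the slice map `B ⊗_p B → B`,
`x ⊗ y ↦ ψ y x`. The left module property of `ρ` passes to it because the slice map is a
left module map, `ψ̃ ∘ π_B** ∘ ρ = ψ` gives `ψ̃ ∘ θ = ψ` since `ψ` is multiplicative, and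
`ρ (a b) = ψ b • ρ a` makes `θ` vanish on `B · ker ψ`, hence on its closure `ker ψ`, so that
it descends to `B ⧸ ker ψ`. -/
def sliceBidual (ψ : Dual ℂ B) (ρ : B →L[ℂ] TensorBidual B) : B →L[ℂ] Bidual B :=
  (precomp ℂ (sliceRight ψ)).comp ρ

@[simp]
theorem sliceBidual_apply (ψ : Dual ℂ B) (ρ : B →L[ℂ] TensorBidual B) (a : B) (f : Dual ℂ B) :
    sliceBidual ψ ρ a f = ρ a (sliceRight ψ f) := rfl

theorem sliceBidual_map_mul {μ : B →L[ℂ] B →L[ℂ] B} {ψ : Dual ℂ B} {ρ : B →L[ℂ] TensorBidual B}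
    (hρ : ∀ a b : B, ρ (μ a b) = tensorLSmul μ a (ρ b)) (a b : B) :
    sliceBidual ψ ρ (μ a b) = bidualLSmul μ a (sliceBidual ψ ρ b) := by
  ext f
  rw [sliceBidual_apply, hρ]
  exact congrArg (ρ b) (sliceRight_comp μ ψ f a)

theorem sliceBidual_apply_self {μ : B →L[ℂ] B →L[ℂ] B} {ψ : Dual ℂ B}
    {ρ : B →L[ℂ] TensorBidual B} (hψ : ∀ x y : B, ψ (μ x y) = ψ x * ψ y)
    (hρψ : ∀ a : B, ρ a (piDual μ ψ) = ψ a) (a : B) : sliceBidual ψ ρ a ψ = ψ a := by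
  rw [sliceBidual_apply, sliceRight_self_eq_piDual hψ, hρψ]

theorem ker_le_ker_of_map_mul_eq_smul {E : Type*} [AddCommGroup E] [Module ℂ E]
    [TopologicalSpace E] [T1Space E] {μ : B →L[ℂ] B →L[ℂ] B} {ψ : Dual ℂ B} {ρ : B →L[ℂ] E}
    (hρ : ∀ a b : B, ρ (μ a b) = ψ b • ρ a)
    (hker : closure {x : B | ∃ a l : B, ψ l = 0 ∧ x = μ a l} = {x : B | ψ x = 0}) :
    LinearMap.ker (ψ : B →ₗ[ℂ] ℂ) ≤ LinearMap.ker (ρ : B →ₗ[ℂ] E) := by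
  intro x hx
  have hprod : {x : B | ∃ a l : B, ψ l = 0 ∧ x = μ a l} ⊆ ρ ⁻¹' {0} := by
    rintro _ ⟨a, l, hl, rfl⟩
    simp [hρ, hl]
  have hx' : x ∈ closure {x : B | ∃ a l : B, ψ l = 0 ∧ x = μ a l} := hker ▸ hx
  exact closure_minimal hprod (isClosed_singleton.preimage ρ.continuous) hx'

variable {A : Type*} [NonUnitalNormedRing A] [NormedSpace ℂ A]
  [IsScalarTower ℂ A A] [SMulCommClass ℂ A A] [CompleteSpace A]

theorem exists_module_morphism_quotient_to_bidual_general
    (φ : A →L[ℂ] ℂ)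
    (hφ_mul : ∀ a b : A, φ (a * b) = φ a * φ b)
    (hker : closure {x : A | ∃ a l : A, φ l = 0 ∧ x = a * l} = {x : A | φ x = 0})
    (hbf : IsLeftBiflat (ContinuousLinearMap.mul ℂ A) φ) :
    ∃ θ : (A ⧸ LinearMap.ker (φ : A →ₗ[ℂ] ℂ)) →L[ℂ] Bidual A,
      (∀ a b : A, θ (Submodule.Quotient.mk (a * b)) =
        bidualLSmul (ContinuousLinearMap.mul ℂ A) a (θ (Submodule.Quotient.mk b))) ∧
      ∀ a : A, θ (Submodule.Quotient.mk a) φ = φ a := by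
  obtain ⟨ρ, hρ, hρφ⟩ := hbf
  have hle :
      LinearMap.ker (φ : A →ₗ[ℂ] ℂ) ≤ LinearMap.ker (sliceBidual φ ρ : A →ₗ[ℂ] Bidual A) :=
    (ker_le_ker_of_map_mul_eq_smul (fun a b => (hρ a b).1) hker).trans
      (LinearMap.ker_le_ker_comp _ _)
  exact ⟨(LinearMap.ker (φ : A →ₗ[ℂ] ℂ)).liftQL (sliceBidual φ ρ) hle,
    sliceBidual_map_mul fun a b => (hρ a b).2, sliceBidual_apply_self hφ_mul hρφ⟩

/-- Step 2 of the proof of Lemma 2.1: if `A` is left `φ`-biflat and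
`ker φ` is the norm-closure of the set of products `A · ker φ`, then there is a bounded
left `A`-module morphism `θ : A ⧸ ker φ → A**` with `φ̃ (θ (a + ker φ)) = φ (a)` for all
`a ∈ A`.  The quotient carries the quotient left `A`-module structure
`a • (b + ker φ) = a b + ker φ`, and the left action on `A**` is the canonical one,
`(a • m) f = m (f ∘ (a * ·))`. -/
theorem exists_module_morphism_quotient_to_bidual
    (φ : A →L[ℂ] ℂ) (hφ_ne : φ ≠ 0)
    (hφ_mul : ∀ a b : A, φ (a * b) = φ a * φ b)
    (hker : closure {x : A | ∃ a l : A, φ l = 0 ∧ x = a * l} = {x : A | φ x = 0})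
    (hbf : IsLeftBiflat (ContinuousLinearMap.mul ℂ A) φ) :
    ∃ θ : (A ⧸ LinearMap.ker (φ : A →ₗ[ℂ] ℂ)) →L[ℂ] Bidual A,
      (∀ a b : A, θ (Submodule.Quotient.mk (a * b)) =
        bidualLSmul (ContinuousLinearMap.mul ℂ A) a (θ (Submodule.Quotient.mk b))) ∧
      ∀ a : A, θ (Submodule.Quotient.mk a) φ = φ a :=
  exists_module_morphism_quotient_to_bidual_general φ hφ_mul hker hbf
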